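/- arXiv:1901.01797 — 6 statements merged into one kernel-verified Lean document; each statement's English description precedes it below -/
import Mathlib

section
/- Let G be a finite simple graph and P ⊆ V(G). A layering λ of the induced subgraph G[P] extends to a layering of G if and only if λ is G-geodesic. -/
/-!
A layering is exactly a `1`-Lipschitz map from the graph metric of `G` to `ℤ`, so it is
`G`-geodesic on every vertex set. Conversely, a `G`-geodesic `λ` on `P` is `1`-Lipschitz on `P`
for the graph metric, and its McShane extension `v ↦ inf {λ x + d(x, v) | x ∈ P}` (the infimum
taken over the component of `v`) is a layering of `G` agreeing with `λ` on `P`.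
-/

/-- A layering of a simple graph: adjacent vertices differ by at most 1. -/
def IsLayering {V : Type*} (G : SimpleGraph V) (lam : V → ℤ) : Prop :=
  ∀ ⦃u v : V⦄, G.Adj u v → |lam u - lam v| ≤ 1

def IsGeodesicOn {V : Type*} (G : SimpleGraph V) (P : Set V) (lam : V → ℤ) : Prop :=
  ∀ x ∈ P, ∀ y ∈ P, G.Reachable x y → |lam x - lam y| ≤ (G.dist x y : ℤ)

/-- Junk value: `sInf ∅ = 0` in `ℤ`, so the extension is `0` on components of `G` missing `P`. -/
noncomputable def mcshaneExtension {V : Type*} (G : SimpleGraph V) (P : Set V) (lam : V → ℤ)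
    (v : V) : ℤ :=
  sInf ((fun x => lam x + (G.dist x v : ℤ)) '' {x | x ∈ P ∧ G.Reachable x v})

section

variable {V : Type*} {G : SimpleGraph V} {P : Set V} {lam : V → ℤ}

theorem IsLayering.abs_sub_le_length (h : IsLayering G lam) {x y : V} (p : G.Walk x y) :
    |lam x - lam y| ≤ p.length := by
  induction p with
  | nil => simp
  | @cons u v w hadj p ih =>
    calc |lam u - lam w| ≤ |lam u - lam v| + |lam v - lam w| := abs_sub_le _ _ _
      _ ≤ 1 + p.length := add_le_add (h hadj) ih
      _ = (p.cons hadj).length := by simp [add_comm]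

theorem IsLayering.isGeodesicOn (h : IsLayering G lam) (P : Set V) : IsGeodesicOn G P lam := by
  intro x _ y _ hxy
  obtain ⟨p, hp⟩ := hxy.exists_walk_length_eq_dist
  exact hp ▸ h.abs_sub_le_length p

namespace IsGeodesicOn

theorem bddBelow_mcshane (h : IsGeodesicOn G P lam) (v : V) :
    BddBelow ((fun x => lam x + (G.dist x v : ℤ)) '' {x | x ∈ P ∧ G.Reachable x v}) := by
  rcases Set.eq_empty_or_nonempty {x | x ∈ P ∧ G.Reachable x v} with hempty | ⟨y, hyP, hyv⟩
  · simp [hempty]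
  refine ⟨lam y - G.dist y v, ?_⟩
  rintro _ ⟨x, ⟨hxP, hxv⟩, rfl⟩
  have hgeo := (abs_le.mp (h y hyP x hxP (hyv.trans hxv.symm))).2
  have htri : G.dist y x ≤ G.dist y v + G.dist v x := hxv.symm.dist_triangle_right y
  rw [G.dist_comm (u := v)] at htri
  push_cast at htri ⊢
  linarith

theorem mcshaneExtension_le (h : IsGeodesicOn G P lam) {x v : V} (hx : x ∈ P)
    (hxv : G.Reachable x v) : mcshaneExtension G P lam v ≤ lam x + G.dist x v :=
  csInf_le (h.bddBelow_mcshane v) ⟨x, ⟨hx, hxv⟩, rfl⟩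

theorem mcshaneExtension_le_add_one (h : IsGeodesicOn G P lam) {a b : V} (hab : G.Adj a b) :
    mcshaneExtension G P lam a ≤ mcshaneExtension G P lam b + 1 := by
  have hreach : ∀ x, G.Reachable x a ↔ G.Reachable x b := fun x =>
    ⟨fun hxa => hxa.trans hab.reachable, fun hxb => hxb.trans hab.symm.reachable⟩
  rcases Set.eq_empty_or_nonempty {x | x ∈ P ∧ G.Reachable x b} with hempty | hne
  · have hempty' : {x | x ∈ P ∧ G.Reachable x a} = ∅ := by simpa only [hreach] using hempty
    simp [mcshaneExtension, hempty, hempty']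
  rw [← sub_le_iff_le_add]
  refine le_csInf (hne.image _) ?_
  rintro _ ⟨x, ⟨hxP, hxb⟩, rfl⟩
  have hdist : G.dist x a ≤ G.dist x b + 1 :=
    G.dist_eq_one_iff_adj.mpr hab.symm ▸ hab.symm.reachable.dist_triangle_right x
  have := h.mcshaneExtension_le hxP ((hreach x).mpr hxb)
  push_cast at hdist ⊢
  linarith

theorem isLayering_mcshaneExtension (h : IsGeodesicOn G P lam) :
    IsLayering G (mcshaneExtension G P lam) := fun _ _ hab =>
  abs_sub_le_iff.mpr ⟨sub_le_iff_le_add'.mpr (h.mcshaneExtension_le_add_one hab),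
    sub_le_iff_le_add'.mpr (h.mcshaneExtension_le_add_one hab.symm)⟩

theorem mcshaneExtension_eq (h : IsGeodesicOn G P lam) {x : V} (hx : x ∈ P) :
    mcshaneExtension G P lam x = lam x := by
  refine IsLeast.csInf_eq ⟨⟨x, ⟨hx, .refl x⟩, by simp⟩, ?_⟩
  rintro _ ⟨y, ⟨hyP, hyx⟩, rfl⟩
  have := (abs_le.mp (h x hx y hyP hyx.symm)).2
  rw [G.dist_comm] at this
  linarith

end IsGeodesicOn

end

theorem stmt_0_general {V : Type*} (G : SimpleGraph V) (P : Set V)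
    (lam : V → ℤ) :
    (∃ lam' : V → ℤ, IsLayering G lam' ∧ ∀ x ∈ P, lam' x = lam x) ↔
      (∀ x ∈ P, ∀ y ∈ P, G.Reachable x y → |lam x - lam y| ≤ (G.dist x y : ℤ)) := by
  constructor
  · rintro ⟨lam', hlam', hagree⟩ x hx y hy hxy
    rw [← hagree x hx, ← hagree y hy]
    exact hlam'.isGeodesicOn P x hx y hy hxy
  · intro (hgeo : IsGeodesicOn G P lam)
    exact ⟨mcshaneExtension G P lam, hgeo.isLayering_mcshaneExtension,
      fun _ hx => hgeo.mcshaneExtension_eq hx⟩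

/-- A layering of the induced subgraph `G[P]` extends to a layering of `G`
iff it is `G`-geodesic. -/
theorem stmt_0 {V : Type*} [Fintype V] (G : SimpleGraph V) (P : Set V)
    (lam : V → ℤ)
    (hlay : ∀ u ∈ P, ∀ v ∈ P, G.Adj u v → |lam u - lam v| ≤ 1) :
    (∃ lam' : V → ℤ, IsLayering G lam' ∧ ∀ x ∈ P, lam' x = lam x) ↔
      (∀ x ∈ P, ∀ y ∈ P, G.Reachable x y → |lam x - lam y| ≤ (G.dist x y : ℤ)) :=
  stmt_0_general G P lam
end

section
/- If C is a Baker class of ordered graphs, then for every integer d ≥ 1 the class C^(d) is a Baker class. -/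
/-- The spanning subgraph of `G` keeping only the edges with both ends in `U`.
Reachability and distances between vertices of `U` in this graph coincide with those
in the induced subgraph `G[U]`. -/
def restrictSet {V : Type*} (G : SimpleGraph V) (U : Set V) : SimpleGraph V where
  Adj u v := G.Adj u v ∧ u ∈ U ∧ v ∈ U
  symm := ⟨fun _ _ ⟨h, hu, hv⟩ => ⟨h.symm, hv, hu⟩⟩
  loopless := ⟨fun u ⟨h, _, _⟩ => G.loopless.irrefl u h⟩

/-- `BakerWins G t S r` : Destroyer wins the Baker game in at most `t` rounds on the state
whose ordered graph is the subgraph of `G` induced on `S` (with the inherited vertex order)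
and whose sequence is `r` (0-indexed: `r 0` is the first term `r₁`).
If the vertex set is empty, Destroyer has won; otherwise he needs `t ≥ 1` and either
(Delete) he wins on the graph minus its smallest vertex with the tail of the sequence, or
(Restrict) there is a layering `lam` of the current graph such that for every interval of
at most `r 0` consecutive integers, he wins on the induced subgraph on the corresponding
layers with the tail of the sequence. -/
def BakerWins {V : Type*} [LinearOrder V] (G : SimpleGraph V) :
    ℕ → Set V → (ℕ → ℕ) → Prop
  | 0, S, _ => S = ∅
  | t + 1, S, r => S = ∅ ∨
      ((∃ v ∈ S, (∀ u ∈ S, v ≤ u) ∧ BakerWins G t (S \ {v}) (fun i => r (i + 1))) ∨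
       (∃ lam : V → ℤ,
          (∀ u ∈ S, ∀ w ∈ S, G.Adj u w → |lam u - lam w| ≤ 1) ∧
          ∀ a b : ℤ, b + 1 ≤ a + (r 0 : ℤ) →
            BakerWins G t {v | v ∈ S ∧ lam v ∈ Set.Icc a b} (fun i => r (i + 1))))

/-- An ordered graph: a finite simple graph with a linear order on its vertices. -/
structure OrderedGraph : Type 1 where
  V : Type
  [fin : Fintype V]
  [ord : LinearOrder V]
  graph : SimpleGraph V

attribute [instance] OrderedGraph.fin OrderedGraph.ord

/-- A class of ordered graphs is a Baker class if for every infinite sequence of positive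
integers `r` there is `t` such that Destroyer wins the Baker game on `(G, r)` in `t` rounds
for every `G` in the class. -/
def IsBakerClass (C : Set OrderedGraph) : Prop :=
  ∀ r : ℕ → ℕ, (∀ i, 0 < r i) → ∃ t : ℕ, ∀ O ∈ C, BakerWins O.graph t Set.univ r

/-- The quotient graph `G/𝒫` of an ordered graph by a partition `P : Fin m → Set O.V`:
vertex `i` is adjacent to vertex `j` iff `i ≠ j` and some `u ∈ P i`, `v ∈ P j` are
adjacent in `G`. -/
def quotGraph (O : OrderedGraph) (m : ℕ) (P : Fin m → Set O.V) : SimpleGraph (Fin m) where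
  Adj i j := i ≠ j ∧ ∃ u ∈ P i, ∃ v ∈ P j, O.graph.Adj u v
  symm := by
    constructor
    rintro i j ⟨hij, u, hu, v, hv, huv⟩
    exact ⟨hij.symm, v, hv, u, hu, huv.symm⟩
  loopless := by constructor; rintro i ⟨hii, -⟩; exact hii rfl

/-- The quotient ordered graph `G/𝒫`, on `Fin m` with its natural order. -/
def OrderedGraph.quot (O : OrderedGraph) (m : ℕ) (P : Fin m → Set O.V) : OrderedGraph where
  V := Fin m
  graph := quotGraph O m P

/-- The class `C^(d)`: ordered graphs admitting a width-`d` geodesic partition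
`P₁, …, P_m` (each `G[P i]` has a layering which is geodesic with respect to
`G[P i ∪ ⋯ ∪ P m]` and has width at most `d`) whose quotient belongs to `C`. -/
def Cpow (C : Set OrderedGraph) (d : ℕ) : Set OrderedGraph :=
  {O | ∃ (m : ℕ) (P : Fin m → Set O.V),
    (∀ i, (P i).Nonempty) ∧
    (∀ i j, i ≠ j → Disjoint (P i) (P j)) ∧
    (⋃ i, P i) = Set.univ ∧
    (∀ i j : Fin m, i < j → ∀ u ∈ P i, ∀ v ∈ P j, u < v) ∧
    (∀ i : Fin m, ∃ lam : O.V → ℤ,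
      (∀ x ∈ P i, ∀ y ∈ P i, O.graph.Adj x y → |lam x - lam y| ≤ 1) ∧
      (∀ x ∈ P i, ∀ y ∈ P i,
        (restrictSet O.graph (⋃ j ∈ Set.Ici i, P j)).Reachable x y →
          |lam x - lam y| ≤ ((restrictSet O.graph (⋃ j ∈ Set.Ici i, P j)).dist x y : ℤ)) ∧
      (∀ z : ℤ, ({v | v ∈ P i ∧ lam v = z}).ncard ≤ d)) ∧
    O.quot m P ∈ C}

/-! Destroyer wins on `G` by simulating a winning strategy on the quotient `G/𝒫`, spending
`d * r₁ + 1` rounds on `G` for each quotient round while keeping every remaining vertex of `G` in a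
remaining part. The geodesic layering of the smallest remaining part extends to a layering of the
whole remaining graph, and a window of `r₁` of its layers meets that part in at most `d * r₁`
vertices, which lie below all others and can be deleted one by one. -/

section BakerGame

variable {V : Type*} [LinearOrder V] {G : SimpleGraph V}

theorem bakerWins_empty (t : ℕ) (r : ℕ → ℕ) : BakerWins G t (∅ : Set V) r := by
  cases t with
  | zero => rfl
  | succ t => exact Or.inl rfl

theorem bakerWins_of_tail {t : ℕ} {S : Set V} {r : ℕ → ℕ}
    (h : BakerWins G t S (fun i => r (i + 1))) : BakerWins G (t + 1) S r := by
  refine Or.inr (Or.inr ⟨fun _ => 0, fun _ _ _ _ _ => by simp, fun a b _ => ?_⟩)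
  by_cases h0 : (0 : ℤ) ∈ Set.Icc a b
  · simpa [h0] using h
  · simpa [h0] using bakerWins_empty t (fun i => r (i + 1))

theorem bakerWins_add_of_initialSegment [Finite V] {n t : ℕ} {F S : Set V} {r : ℕ → ℕ}
    (hFS : F ⊆ S) (hF : F.ncard ≤ n) (hmin : ∀ x ∈ F, ∀ y ∈ S \ F, x ≤ y)
    (h : BakerWins G t (S \ F) (fun i => r (i + n))) : BakerWins G (t + n) S r := by
  induction n generalizing F S r with
  | zero =>
    obtain rfl : F = ∅ := (Set.ncard_eq_zero F.toFinite).mp (Nat.le_zero.mp hF)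
    simpa using h
  | succ n ih =>
    rcases F.eq_empty_or_nonempty with rfl | hne
    · exact bakerWins_of_tail (ih (Set.empty_subset _) (by simp) (by simp) h)
    obtain ⟨v, hvF, hv⟩ := Set.exists_min_image F id F.toFinite hne
    have hvS : ∀ u ∈ S, v ≤ u := by
      intro u hu
      by_cases huF : u ∈ F
      · exact hv u huF
      · exact hmin v hvF u ⟨hu, huF⟩
    have hdiff : (S \ {v}) \ (F \ {v}) = S \ F := by
      ext x
      by_cases hx : x = v <;> simp [hx, hvF]
    refine Or.inr (Or.inl ⟨v, hFS hvF, hvS, ?_⟩)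
    refine ih (F := F \ {v}) (Set.sdiff_subset_sdiff_left hFS) ?_ ?_ (hdiff ▸ h)
    · have := Set.ncard_sdiff_singleton_add_one hvF F.toFinite
      omega
    · rintro x ⟨hxF, -⟩ y hy
      rw [hdiff] at hy
      exact hmin x hxF y hy

end BakerGame

section LayeringExtension

variable {V : Type*} [Finite V] {H : SimpleGraph V}

/-- Equal to `0` where no vertex of `A` is reachable, as `sInf ∅ = 0` in `ℤ`. -/
noncomputable def geodesicExtension (H : SimpleGraph V) (A : Set V) (f : V → ℤ) (v : V) : ℤ :=
  sInf ((fun a => f a + H.dist a v) '' {a | a ∈ A ∧ H.Reachable a v})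

theorem geodesicExtension_le {A : Set V} (f : V → ℤ) {a v : V} (ha : a ∈ A)
    (hav : H.Reachable a v) : geodesicExtension H A f v ≤ f a + H.dist a v :=
  csInf_le (Set.toFinite _).bddBelow ⟨a, ⟨ha, hav⟩, rfl⟩

theorem geodesicExtension_le_add_one {A : Set V} (f : V → ℤ) {u v : V} (huv : H.Adj u v) :
    geodesicExtension H A f u ≤ geodesicExtension H A f v + 1 := by
  rcases {a | a ∈ A ∧ H.Reachable a v}.eq_empty_or_nonempty with hv | hv
  · have hu : {a | a ∈ A ∧ H.Reachable a u} = ∅ :=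
      Set.eq_empty_of_forall_notMem fun a ⟨ha, hau⟩ =>
        hv.subset ⟨ha, hau.trans huv.reachable⟩
    simp [geodesicExtension, hu, hv]
  obtain ⟨a, ⟨ha, hav⟩, hmin⟩ :=
    (hv.image fun a => f a + (H.dist a v : ℤ)).csInf_mem (Set.toFinite _)
  have hdist : H.dist a u ≤ H.dist a v + 1 := by
    rcases huv.symm.diff_dist_adj (u := a) with h | h | h <;> omega
  calc geodesicExtension H A f u ≤ f a + H.dist a u :=
        geodesicExtension_le f ha (hav.trans huv.symm.reachable)
    _ ≤ f a + H.dist a v + 1 := by omega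
    _ = geodesicExtension H A f v + 1 := by rw [geodesicExtension, ← hmin]

theorem isLayering_geodesicExtension (A : Set V) (f : V → ℤ) :
    IsLayering H (geodesicExtension H A f) := by
  intro u v huv
  have := geodesicExtension_le_add_one (A := A) f huv
  have := geodesicExtension_le_add_one (A := A) f huv.symm
  rw [abs_le]
  constructor <;> linarith

theorem geodesicExtension_eq {A : Set V} {f : V → ℤ}
    (hf : ∀ x ∈ A, ∀ y ∈ A, H.Reachable x y → f y - f x ≤ H.dist x y) {v : V} (hv : v ∈ A) :
    geodesicExtension H A f v = f v := by
  refine le_antisymm (by simpa using geodesicExtension_le (H := H) f hv (.refl v)) ?_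
  refine le_csInf ⟨_, ⟨v, ⟨hv, .refl v⟩, rfl⟩⟩ ?_
  rintro _ ⟨a, ⟨ha, hav⟩, rfl⟩
  linarith [hf a ha v hv hav]

end LayeringExtension

theorem restrictSet_mono {V : Type*} (G : SimpleGraph V) {U U' : Set V} (h : U ⊆ U') :
    restrictSet G U ≤ restrictSet G U' := fun _ _ ⟨huv, hu, hv⟩ => ⟨huv, h hu, h hv⟩

/-- The vertices of `Q` index a width-`d` geodesic partition of `G` into the fibres of `π`, with
`Q` containing the quotient graph; `lam i` layers the fibre over `i`. -/
structure IsGeodesicQuotient {V W : Type*} [LinearOrder V] [LinearOrder W]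
    (G : SimpleGraph V) (Q : SimpleGraph W) (π : V → W) (d : ℕ) (lam : W → V → ℤ) : Prop where
  lt_of_lt : ∀ ⦃u v⦄, π u < π v → u < v
  adj : ∀ ⦃u v⦄, G.Adj u v → π u ≠ π v → Q.Adj (π u) (π v)
  geodesic : ∀ ⦃x y⦄, π x = π y → (restrictSet G {v | π x ≤ π v}).Reachable x y →
    lam (π x) y - lam (π x) x ≤ (restrictSet G {v | π x ≤ π v}).dist x y
  width : ∀ i z, {v | π v = i ∧ lam i v = z}.ncard ≤ d

/-- The sequence `s` with the block of `d * s 0 + 1` rounds spent on one quotient round removed. -/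
def blockShift (d : ℕ) (s : ℕ → ℕ) : ℕ → ℕ := fun i => s (i + d * s 0 + 1)

def quotSeq (d : ℕ) : (ℕ → ℕ) → ℕ → ℕ
  | s, 0 => s 0
  | s, k + 1 => quotSeq d (blockShift d s) k

def liftRounds (d : ℕ) : (ℕ → ℕ) → ℕ → ℕ
  | _, 0 => 0
  | s, k + 1 => liftRounds d (blockShift d s) k + d * s 0 + 1

theorem quotSeq_pos {d : ℕ} {s : ℕ → ℕ} (hs : ∀ i, 0 < s i) (k : ℕ) : 0 < quotSeq d s k := by
  induction k generalizing s with
  | zero => exact hs 0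
  | succ k ih => exact ih fun i => hs _

namespace IsGeodesicQuotient

variable {V W : Type*} [LinearOrder V] [LinearOrder W] {G : SimpleGraph V} {Q : SimpleGraph W}
  {π : V → W} {d : ℕ} {lam : W → V → ℤ}

theorem geodesic_of_subset (hπ : IsGeodesicQuotient G Q π d lam) {S : Set V} {x y : V}
    (hS : S ⊆ {v | π x ≤ π v}) (hxy : π x = π y) (hr : (restrictSet G S).Reachable x y) :
    lam (π x) y - lam (π x) x ≤ (restrictSet G S).dist x y := by
  have hle := restrictSet_mono G hS
  calc lam (π x) y - lam (π x) x ≤ (restrictSet G {v | π x ≤ π v}).dist x y :=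
        hπ.geodesic hxy (hr.mono hle)
    _ ≤ (restrictSet G S).dist x y := by exact_mod_cast hr.dist_anti hle

theorem ncard_window_le (hπ : IsGeodesicQuotient G Q π d lam) (i : W) {a b : ℤ} {k : ℕ}
    (hab : b + 1 ≤ a + k) : {v | π v = i ∧ lam i v ∈ Set.Icc a b}.ncard ≤ k * d := by
  have hunion : {v | π v = i ∧ lam i v ∈ Set.Icc a b} =
      ⋃ z ∈ Finset.Icc a b, {v | π v = i ∧ lam i v = z} := by
    ext v
    simp
  calc _ ≤ ∑ z ∈ Finset.Icc a b, {v | π v = i ∧ lam i v = z}.ncard :=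
        hunion ▸ Finset.set_ncard_biUnion_le _ _
    _ ≤ (Finset.Icc a b).card * d :=
        (Finset.Icc a b).sum_le_card_nsmul _ d fun z _ => hπ.width i z
    _ ≤ k * d := Nat.mul_le_mul_right d (by rw [Int.card_Icc]; omega)

variable [Finite V]

theorem bakerWins_of_delete (hπ : IsGeodesicQuotient G Q π d lam) {S : Set V} {T : Set W}
    {i : W} {s : ℕ → ℕ} {n : ℕ} (hST : S ⊆ π ⁻¹' T) (hi : ∀ j ∈ T, i ≤ j)
    (hrest : ∀ S', S' ⊆ π ⁻¹' (T \ {i}) → BakerWins G n S' (blockShift d s)) :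
    BakerWins G (n + d * s 0 + 1) S s := by
  set A := S ∩ π ⁻¹' {i}
  have hgeo : ∀ x ∈ A, ∀ y ∈ A, (restrictSet G S).Reachable x y →
      lam i y - lam i x ≤ (restrictSet G S).dist x y := by
    rintro x ⟨hxS, rfl⟩ y ⟨-, hy⟩ hr
    exact hπ.geodesic_of_subset (fun v hv => hi _ (hST hv)) hy.symm hr
  set Λ := geodesicExtension (restrictSet G S) A (lam i)
  refine Or.inr (Or.inr ⟨Λ, fun u hu w hw huw => isLayering_geodesicExtension _ _ ⟨huw, hu, hw⟩,
    fun a b hab => ?_⟩)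
  set window := {v | v ∈ S ∧ Λ v ∈ Set.Icc a b}
  have hwindow : window ∩ π ⁻¹' {i} ⊆ {v | π v = i ∧ lam i v ∈ Set.Icc a b} := by
    rintro v ⟨⟨hvS, hvΛ⟩, hvi⟩
    exact ⟨hvi, geodesicExtension_eq hgeo ⟨hvS, hvi⟩ ▸ hvΛ⟩
  refine bakerWins_add_of_initialSegment Set.inter_subset_left ?_ ?_
    (hrest _ fun v ⟨hv, hvi⟩ => ⟨hST hv.1, fun h => hvi ⟨hv, h⟩⟩)
  · rw [mul_comm]
    exact (Set.ncard_le_ncard hwindow).trans (hπ.ncard_window_le i hab)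
  · rintro x ⟨-, hxi⟩ y ⟨hy, hyi⟩
    have hiy : i ≠ π y := fun h => hyi ⟨hy, h.symm⟩
    exact (hπ.lt_of_lt (hxi ▸ lt_of_le_of_ne (hi _ (hST hy.1)) hiy)).le

/-- Lifting a quotient Restrict along `μ`: restrict along `μ ∘ π`, then idle for `d * s 0`
rounds to stay in step with `blockShift`. -/
theorem bakerWins_of_restrict (hπ : IsGeodesicQuotient G Q π d lam) {S : Set V} {T : Set W}
    {μ : W → ℤ} {s : ℕ → ℕ} {n : ℕ} (hST : S ⊆ π ⁻¹' T)
    (hμ : ∀ u ∈ T, ∀ w ∈ T, Q.Adj u w → |μ u - μ w| ≤ 1)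
    (hrest : ∀ a b : ℤ, b + 1 ≤ a + s 0 →
      ∀ S', S' ⊆ π ⁻¹' {j | j ∈ T ∧ μ j ∈ Set.Icc a b} → BakerWins G n S' (blockShift d s)) :
    BakerWins G (n + d * s 0 + 1) S s := by
  refine Or.inr (Or.inr ⟨μ ∘ π, fun u hu w hw huw => ?_, fun a b hab => ?_⟩)
  · by_cases h : π u = π w
    · simp [h]
    · exact hμ _ (hST hu) _ (hST hw) (hπ.adj huw h)
  · refine bakerWins_add_of_initialSegment (F := ∅) (Set.empty_subset _) (by simp) (by simp) ?_
    rw [Set.sdiff_empty]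
    exact hrest a b hab _ fun v ⟨hv, hva⟩ => ⟨hST hv, hva⟩

theorem bakerWins_lift (hπ : IsGeodesicQuotient G Q π d lam) {t : ℕ} {T : Set W} {s : ℕ → ℕ}
    (h : BakerWins Q t T (quotSeq d s)) {S : Set V} (hST : S ⊆ π ⁻¹' T) :
    BakerWins G (liftRounds d s t) S s := by
  induction t generalizing s S T with
  | zero =>
    obtain rfl : T = ∅ := h
    obtain rfl : S = ∅ := Set.subset_empty_iff.mp hST
    exact bakerWins_empty _ _
  | succ t ih =>
    rcases h with rfl | ⟨i, -, hi, hdel⟩ | ⟨μ, hμ, hres⟩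
    · obtain rfl : S = ∅ := Set.subset_empty_iff.mp hST
      exact bakerWins_empty _ _
    · exact hπ.bakerWins_of_delete hST hi fun S' hS' => ih hdel hS'
    · exact hπ.bakerWins_of_restrict hST hμ fun a b hab S' hS' => ih (hres a b hab) hS'

end IsGeodesicQuotient

theorem exists_isGeodesicQuotient_of_mem_Cpow {C : Set OrderedGraph} {d : ℕ} {O : OrderedGraph}
    (hO : O ∈ Cpow C d) : ∃ Q ∈ C, ∃ (π : O.V → Q.V) (lam : Q.V → O.V → ℤ),
      IsGeodesicQuotient O.graph Q.graph π d lam := by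
  obtain ⟨m, P, -, hdisj, hcover, hord, hlay, hQ⟩ := hO
  choose lam _ hgeo hwidth using hlay
  have hcover' : ∀ v, ∃ i, v ∈ P i := fun v => Set.mem_iUnion.mp (hcover ▸ Set.mem_univ v)
  choose π hpart using hcover'
  have hmem : ∀ {v i}, v ∈ P i ↔ π v = i := fun {v i} =>
    ⟨fun hv => by_contra fun h => Set.disjoint_left.mp (hdisj _ _ h) (hpart v) hv,
      fun h => h ▸ hpart v⟩
  have hupper : ∀ i, ⋃ j ∈ Set.Ici i, P j = {v | i ≤ π v} := fun i => by
    ext v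
    simp [hmem]
  have hgeo' : ∀ x y, π x = π y → (restrictSet O.graph {v | π x ≤ π v}).Reachable x y →
      lam (π x) y - lam (π x) x ≤ (restrictSet O.graph {v | π x ≤ π v}).dist x y := by
    intro x y hxy hr
    rw [← hupper] at hr ⊢
    exact (le_abs_self _).trans
      (abs_sub_comm (lam _ x) _ ▸ hgeo _ x (hpart x) y (hxy ▸ hpart y) hr)
  have hwidth' : ∀ i z, {v | π v = i ∧ lam i v = z}.ncard ≤ d := fun i z => by
    simpa only [← hmem] using hwidth i z
  exact ⟨O.quot m P, hQ, π, lam, ⟨fun u v huv => hord _ _ huv u (hpart u) v (hpart v),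
    fun u v huv hne => ⟨hne, u, hpart u, v, hpart v, huv⟩, hgeo', hwidth'⟩⟩

theorem stmt_3_general (C : Set OrderedGraph) (hC : IsBakerClass C) (d : ℕ) :
    IsBakerClass (Cpow C d) := by
  intro r hr
  obtain ⟨t, ht⟩ := hC (quotSeq d r) (quotSeq_pos hr)
  refine ⟨liftRounds d r t, fun O hO => ?_⟩
  obtain ⟨Q, hQC, π, lam, hπ⟩ := exists_isGeodesicQuotient_of_mem_Cpow hO
  exact hπ.bakerWins_lift (ht Q hQC) (Set.subset_univ _)

/-- If `C` is a Baker class, then `C^(d)` is a Baker class for every integer `d ≥ 1`. -/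
theorem stmt_3 (C : Set OrderedGraph) (hC : IsBakerClass C) (d : ℕ) (hd : 1 ≤ d) :
    IsBakerClass (Cpow C d) :=
  stmt_3_general C hC d
end

section
/- Let G be a chordal ordered graph with vertex order ≺. If P = v₁v₂…v_k is an induced path in G and v₁ ≺ v_i for every i with 2 ≤ i ≤ k, then v₁ ≺ v₂ ≺ … ≺ v_k. -/
/-! Going along the path, `v i < v (i + 1)` forces `v (i + 1) < v (i + 2)`: otherwise
`v i` and `v (i + 2)` would be two smaller neighbours of `v (i + 1)`, hence adjacent by
chordality, which an induced path forbids. The hypothesis on `v 0` starts the induction. -/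

/-- A graph with an ordered vertex set is chordal (as an ordered graph) if for every
vertex `v` the neighbors of `v` smaller than `v` induce a clique. -/
def ChordalOrdered {V : Type*} [LinearOrder V] (G : SimpleGraph V) : Prop :=
  ∀ ⦃v u w : V⦄, G.Adj v u → G.Adj v w → u < v → w < v → u ≠ w → G.Adj u w

theorem ChordalOrdered.lt_of_not_adj {V : Type*} [LinearOrder V] {G : SimpleGraph V}
    (hG : ChordalOrdered G) {u v w : V} (hvu : G.Adj v u) (hvw : G.Adj v w) (hu : u < v)
    (huw : u ≠ w) (hnadj : ¬ G.Adj u w) : v < w := by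
  by_contra! hwv
  exact hnadj (hG hvu hvw hu (hwv.lt_of_ne hvw.ne') huw)

theorem stmt_5_general {V : Type*} [LinearOrder V] (G : SimpleGraph V)
    (hG : ChordalOrdered G) (k : ℕ) (v : Fin (k + 1) → V)
    (hinj : Function.Injective v)
    (hpath : ∀ i j : Fin (k + 1), G.Adj (v i) (v j) ↔ (i.val + 1 = j.val ∨ j.val + 1 = i.val))
    (hmin : ∀ i : Fin (k + 1), i ≠ 0 → v 0 < v i) :
    StrictMono v := by
  rw [Fin.strictMono_iff_lt_succ]
  rintro ⟨n, hn⟩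
  induction n with
  | zero => exact hmin _ (Fin.succ_ne_zero _)
  | succ n ih =>
    refine hG.lt_of_not_adj ((hpath _ _).2 ?_) ((hpath _ _).2 ?_) (ih (by omega))
      (hinj.ne ?_) ((hpath _ _).not.2 ?_)
    all_goals grind [Fin.ext_iff]

/-- If `v 0, v 1, …, v k` is an induced path in a chordal ordered graph `G` and `v 0`
is smaller than all the other vertices of the path, then the path is increasing in
the vertex order. -/
theorem stmt_5 {V : Type*} [Fintype V] [LinearOrder V] (G : SimpleGraph V)
    (hG : ChordalOrdered G) (k : ℕ) (v : Fin (k + 1) → V)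
    (hinj : Function.Injective v)
    (hpath : ∀ i j : Fin (k + 1), G.Adj (v i) (v j) ↔ (i.val + 1 = j.val ∨ j.val + 1 = i.val))
    (hmin : ∀ i : Fin (k + 1), i ≠ 0 → v 0 < v i) :
    StrictMono v :=
  stmt_5_general G hG k v hinj hpath hmin
end

section
/- Let d ≥ 1 be an integer and β ≥ 1 a real number, and let G be a finite simple graph that embeds in ℝ^d with distortion β, equipped with an arbitrary linear order on its vertices. Then for every infinite sequence r = r₁, r₂, … of positive integers and every integer t with t ≥ d + ∏_{i=1}^d (β r_i + 1), Destroyer wins the Baker game on (G, r) in t rounds. -/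
/-!
Destroyer restricts once along each coordinate `i`, using the layering `v ↦ ⌊μ(v)ᵢ / β⌋`:
it is a layering because edges have length at most `β`, and a window of `rᵢ` consecutive
layers confines the `i`-th coordinate to an interval of length `β rᵢ`. After `d` restrictions
the remaining vertices lie in a box with sides `β rᵢ`; being `1`-separated in the sup norm,
there are at most `∏ (β rᵢ + 1)` of them, and Destroyer deletes them one by one.
-/

open Set

section Floor

variable {K : Type*} [Field K] [LinearOrder K] [IsStrictOrderedRing K] [FloorRing K]

theorem abs_floor_sub_floor_le_one {x y : K} (h : |x - y| ≤ 1) : |⌊x⌋ - ⌊y⌋| ≤ 1 := by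
  have key : ∀ a b : K, a ≤ b + 1 → ⌊a⌋ ≤ ⌊b⌋ + 1 := fun a b hab =>
    (Int.floor_mono hab).trans_eq (Int.floor_add_one b)
  rw [abs_le] at h ⊢
  have := key x y (by linarith)
  have := key y x (by linarith)
  constructor <;> linarith

theorem abs_sub_lt_one_of_natFloor_eq {x y : K} (hx : 0 ≤ x) (hy : 0 ≤ y) (h : ⌊x⌋₊ = ⌊y⌋₊) :
    |x - y| < 1 :=
  Int.abs_sub_lt_one_of_floor_eq_floor <| by
    rw [← Int.natCast_floor_eq_floor hx, ← Int.natCast_floor_eq_floor hy, h]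

theorem mem_Icc_of_floor_div_mem_Icc {β x : K} (hβ : 0 < β) {a b : ℤ} {n : ℕ}
    (hab : b + 1 ≤ a + n) (hx : ⌊x / β⌋ ∈ Icc a b) : x ∈ Icc (β * a) (β * a + β * n) := by
  have hlow : (a : K) ≤ x / β := (Int.cast_le.2 hx.1).trans (Int.floor_le _)
  have hup : x / β ≤ a + n := calc
    x / β ≤ ⌊x / β⌋ + 1 := (Int.lt_floor_add_one _).le
    _ ≤ b + 1 := by gcongr; exact_mod_cast hx.2
    _ ≤ a + n := by exact_mod_cast hab
  rw [le_div_iff₀ hβ] at hlow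
  rw [div_le_iff₀ hβ] at hup
  constructor <;> linarith

end Floor

theorem ncard_le_prod_of_one_le_norm_sub {V ι : Type*} [Fintype ι] (f : V → ι → ℝ) {S : Set V}
    (hsep : ∀ u ∈ S, ∀ v ∈ S, u ≠ v → 1 ≤ ‖f u - f v‖) (c w : ι → ℝ)
    (hbox : ∀ v ∈ S, ∀ i, f v i ∈ Icc (c i) (c i + w i)) :
    S.ncard ≤ ∏ i, (⌊w i⌋₊ + 1) := by
  classical
  have hnonneg : ∀ v ∈ S, ∀ i, 0 ≤ f v i - c i := fun v hv i => by linarith [(hbox v hv i).1]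
  let T := Fintype.piFinset fun i => Finset.range (⌊w i⌋₊ + 1)
  have hmaps : ∀ v ∈ S, (fun i => ⌊f v i - c i⌋₊) ∈ (T : Set (ι → ℕ)) := by
    intro v hv
    simp only [T, Finset.mem_coe, Fintype.mem_piFinset, Finset.mem_range, Nat.lt_succ_iff]
    exact fun i => Nat.floor_mono (by linarith [(hbox v hv i).2])
  have hinj : InjOn (fun v i => ⌊f v i - c i⌋₊) S := by
    intro u hu v hv huv
    by_contra hne
    refine (hsep u hu v hv hne).not_gt ((pi_norm_lt_iff one_pos).2 fun i => ?_)
    have := abs_sub_lt_one_of_natFloor_eq (hnonneg u hu i) (hnonneg v hv i) (congrFun huv i)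
    rwa [sub_sub_sub_cancel_right] at this
  calc S.ncard ≤ (T : Set (ι → ℕ)).ncard := ncard_le_ncard_of_injOn _ hmaps hinj
    _ = ∏ i, (⌊w i⌋₊ + 1) := by
      simp only [ncard_coe_finset, T, Fintype.card_piFinset, Finset.card_range]

namespace BakerWins

variable {V : Type*} [LinearOrder V] {G : SimpleGraph V}

theorem of_ncard_le {t : ℕ} {S : Set V} (hS : S.Finite) (r : ℕ → ℕ) (h : S.ncard ≤ t) :
    BakerWins G t S r := by
  induction t generalizing S r with
  | zero => exact (ncard_eq_zero hS).1 (Nat.le_zero.1 h)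
  | succ t ih =>
    rw [BakerWins]
    rcases S.eq_empty_or_nonempty with hempty | hne
    · exact Or.inl hempty
    obtain ⟨v, hv, hmin⟩ := exists_min_image S id hS hne
    refine Or.inr (Or.inl ⟨v, hv, hmin, ih hS.sdiff _ ?_⟩)
    rw [ncard_sdiff_singleton_of_mem hv]
    omega

theorem of_layering {t : ℕ} {S : Set V} {r : ℕ → ℕ} (lam : V → ℤ)
    (hlam : ∀ u ∈ S, ∀ w ∈ S, G.Adj u w → |lam u - lam w| ≤ 1)
    (hslab : ∀ a b : ℤ, b + 1 ≤ a + (r 0 : ℤ) →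
      BakerWins G t {v | v ∈ S ∧ lam v ∈ Icc a b} (fun i => r (i + 1))) :
    BakerWins G (t + 1) S r := by
  rw [BakerWins]
  exact Or.inr (Or.inr ⟨lam, hlam, hslab⟩)

end BakerWins

section Embedding

variable {V : Type*} [Finite V] [LinearOrder V] {G : SimpleGraph V} {d : ℕ} {β : ℝ}
  {μ : V → Fin d → ℝ}

theorem bakerWins_of_forall_mem_box (hβ : 0 ≤ β) (hsep : ∀ u v : V, u ≠ v → 1 ≤ ‖μ u - μ v‖)
    {r : ℕ → ℕ} {S : Set V} (hbox : ∀ i : Fin d, ∃ c, ∀ v ∈ S, μ v i ∈ Icc c (c + β * r i))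
    {t : ℕ} (ht : ∏ i : Fin d, (β * r i + 1) ≤ t) (r' : ℕ → ℕ) : BakerWins G t S r' := by
  choose c hc using hbox
  refine BakerWins.of_ncard_le S.toFinite r' (Nat.cast_le.1 (le_trans ?_ ht))
  calc (S.ncard : ℝ) ≤ ∏ i : Fin d, ((⌊β * r i⌋₊ : ℝ) + 1) := by
        exact_mod_cast ncard_le_prod_of_one_le_norm_sub μ (fun u _ v _ => hsep u v) c _
          fun v hv i => hc i v hv
    _ ≤ ∏ i : Fin d, (β * r i + 1) :=
        Finset.prod_le_prod (fun _ _ => by positivity)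
          fun _ _ => by gcongr; exact Nat.floor_le (by positivity)

theorem bakerWins_of_forall_lt_mem_box (hβ : 0 < β)
    (hsep : ∀ u v : V, u ≠ v → 1 ≤ ‖μ u - μ v‖) (hedge : ∀ u v : V, G.Adj u v → ‖μ u - μ v‖ ≤ β)
    (r : ℕ → ℕ) (n : ℕ) :
    ∀ (k : ℕ) (S : Set V) (t : ℕ), k + n = d →
      (∀ i : Fin d, (i : ℕ) < k → ∃ c, ∀ v ∈ S, μ v i ∈ Icc c (c + β * r i)) →
      (n : ℝ) + ∏ i : Fin d, (β * r i + 1) ≤ t → BakerWins G t S (fun j => r (k + j)) := by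
  induction n with
  | zero =>
    intro k S t hk hbox ht
    subst hk
    exact bakerWins_of_forall_mem_box hβ.le hsep (fun i => hbox i i.2) (by simpa using ht) _
  | succ n ih =>
    intro k S t hk hbox ht
    have hprod : 0 ≤ ∏ i : Fin d, (β * r i + 1) := by positivity
    obtain ⟨t, rfl⟩ : ∃ t', t = t' + 1 := Nat.exists_eq_add_one.2 <| by
      have : (0 : ℝ) < t := by push_cast at ht; linarith [(n.cast_nonneg : (0 : ℝ) ≤ n)]
      exact_mod_cast this
    let i₀ : Fin d := ⟨k, by omega⟩
    refine BakerWins.of_layering (fun v => ⌊μ v i₀ / β⌋) (fun u _ w _ huw => ?_)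
      fun a b hab => ?_
    · refine abs_floor_sub_floor_le_one ?_
      rw [← sub_div, abs_div, abs_of_pos hβ, div_le_one hβ]
      exact (norm_le_pi_norm (μ u - μ w) i₀).trans (hedge u w huw)
    · have := ih (k + 1) {v | v ∈ S ∧ ⌊μ v i₀ / β⌋ ∈ Icc a b} t (by omega) ?_
        (by push_cast at ht; linarith)
      · simpa only [Nat.add_right_comm k 1, Nat.add_assoc] using this
      intro i hi
      rcases (Nat.lt_succ_iff_lt_or_eq.1 hi) with hlt | heq
      · obtain ⟨c, hc⟩ := hbox i hlt
        exact ⟨c, fun v hv => hc v hv.1⟩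
      · obtain rfl : i = i₀ := Fin.ext heq
        exact ⟨β * a, fun v hv => mem_Icc_of_floor_div_mem_Icc hβ hab hv.2⟩

end Embedding

theorem stmt_10_general {V : Type*} [Fintype V] [LinearOrder V] (G : SimpleGraph V)
    (d : ℕ) (β : ℝ) (hβ : 1 ≤ β) (μ : V → (Fin d → ℝ))
    (hsep : ∀ u v : V, u ≠ v → 1 ≤ ‖μ u - μ v‖)
    (hedge : ∀ u v : V, G.Adj u v → ‖μ u - μ v‖ ≤ β)
    (r : ℕ → ℕ) (t : ℕ)
    (ht : (d : ℝ) + ∏ i ∈ Finset.range d, (β * r i + 1) ≤ (t : ℝ)) :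
    BakerWins G t Set.univ r := by
  have := bakerWins_of_forall_lt_mem_box (by linarith) hsep hedge r d 0 univ t (zero_add d)
    (fun _ hi => absurd hi (Nat.not_lt_zero _))
    (by rwa [Fin.prod_univ_eq_prod_range (fun i => β * r i + 1)])
  simpa using this

/-- If a finite simple graph `G` embeds in `ℝ^d` (with the sup norm) with distortion
`β ≥ 1`, then for any linear order on its vertices, any sequence `r` of positive
integers and any `t ≥ d + ∏_{i=1}^d (β·r_i + 1)`, Destroyer wins the Baker game on
`(G, r)` in `t` rounds. -/
theorem stmt_10 {V : Type*} [Fintype V] [LinearOrder V] (G : SimpleGraph V)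
    (d : ℕ) (hd : 1 ≤ d) (β : ℝ) (hβ : 1 ≤ β) (μ : V → (Fin d → ℝ))
    (hsep : ∀ u v : V, u ≠ v → 1 ≤ ‖μ u - μ v‖)
    (hedge : ∀ u v : V, G.Adj u v → ‖μ u - μ v‖ ≤ β)
    (r : ℕ → ℕ) (hr : ∀ i, 0 < r i) (t : ℕ)
    (ht : (d : ℝ) + ∏ i ∈ Finset.range d, (β * r i + 1) ≤ (t : ℝ)) :
    BakerWins G t Set.univ r :=
  stmt_10_general G d β hβ μ hsep hedge r t ht
end

section
/- Let d ≥ 1 be an integer, let G be a connected chordal ordered graph with all left-degrees at most d, let v be the smallest vertex of G, and let λ be the BFS layering of G starting from v. Then for all integers b ≥ 0 and k ≥ 1, the induced ordered subgraph G[λ⁻¹({b, b+1, …, b+k−1})] belongs to the class T_{d−1,k}. -/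
/-- The induced ordered subgraph on a set of vertices, with the inherited order. -/
noncomputable def OrderedGraph.induce (O : OrderedGraph) (S : Set O.V) : OrderedGraph where
  V := ↥S
  fin := S.toFinite.fintype
  graph := O.graph.induce S

/-- `C` is the vertex set of a connected component of `G − B`. -/
def IsComponentOf {V : Type*} (G : SimpleGraph V) (B C : Set V) : Prop :=
  ∃ x, x ∉ B ∧ C = {y | (restrictSet G Bᶜ).Reachable x y}

/-- The clique-sum class `C₁ ⊕ C₂`: ordered graphs `G` with a base `B ⊆ V(G)` such that
`G[B] ∈ C₁` and for every connected component `C` of `G − B`: `G[C] ∈ C₂`, the set of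
vertices of `B` with a neighbor in `C` induces a clique, and all its vertices are smaller
than all vertices of `C`. -/
def CliqueSum (C₁ C₂ : Set OrderedGraph) : Set OrderedGraph :=
  {O | ∃ B : Set O.V, O.induce B ∈ C₁ ∧
    ∀ C : Set O.V, IsComponentOf O.graph B C →
      O.induce C ∈ C₂ ∧
      (∀ x ∈ B, (∃ c ∈ C, O.graph.Adj x c) →
        ∀ y ∈ B, (∃ c ∈ C, O.graph.Adj y c) → x ≠ y → O.graph.Adj x y) ∧
      (∀ x ∈ B, (∃ c ∈ C, O.graph.Adj x c) → ∀ c ∈ C, x < c)}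

/-- The class `T_d` of chordal ordered graphs with all left-degrees at most `d`. -/
def Tclass (d : ℕ) : Set OrderedGraph :=
  {O | ChordalOrdered O.graph ∧ ∀ v : O.V, ({u | O.graph.Adj v u ∧ u < v}).ncard ≤ d}

/-- The classes `T_{d,k}`: `Tdr d 0` is `T_{d,1} = T_d` and
`Tdr d n = T_{d,n+1} = T_{d,n} ⊕ T_d`. -/
def Tdr (d : ℕ) : ℕ → Set OrderedGraph
  | 0 => Tclass d
  | n + 1 => CliqueSum (Tdr d n) (Tclass d)

/-!
Along the BFS layering from the smallest vertex, BFS parents are smaller than their children, so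
inside one layer every vertex has at most `d - 1` smaller neighbours. Induct on the number `k` of
layers, taking the lower `k - 1` layers as the base: every component `C` of the rest lies in the
top layer, and a base vertex attached to `C` lies one layer lower, hence is smaller than its
neighbours in `C`. Deleting the largest vertex of a connected set keeps it connected in a chordal
ordered graph; by induction on `C` this makes every attached vertex adjacent to `min C`, and
chordality at `min C` turns the attachment set into a clique below `C`.
-/

open SimpleGraph

section Chordal

variable {V : Type*}

def IsConnectedSet (G : SimpleGraph V) (S : Set V) : Prop :=
  ∀ a ∈ S, ∀ b ∈ S, (restrictSet G S).Reachable a b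

lemma mem_of_reachable_restrictSet {G : SimpleGraph V} {U : Set V} {a b : V}
    (h : (restrictSet G U).Reachable a b) (ha : a ∈ U) : b ∈ U := by
  obtain ⟨w⟩ := h
  induction w with
  | nil => exact ha
  | cons hadj _ ih => exact ih hadj.2.2

lemma isConnectedSet_setOf_reachable (G : SimpleGraph V) (U : Set V) (x : V) :
    IsConnectedSet G {y | (restrictSet G U).Reachable x y} := by
  set C := {y | (restrictSet G U).Reachable x y}
  have lift {a b} (w : (restrictSet G U).Walk a b) (ha : a ∈ C) :
      (restrictSet G C).Reachable a b := by
    induction w with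
    | nil => exact .rfl
    | cons hadj _ ih =>
      have hc : _ ∈ C := ha.trans hadj.reachable
      exact (show (restrictSet G C).Adj _ _ from ⟨hadj.1, ha, hc⟩).reachable.trans (ih hc)
  intro a ha b hb
  obtain ⟨wa⟩ := ha
  obtain ⟨wb⟩ := hb
  exact (lift wa .rfl).symm.trans (lift wb .rfl)

variable [LinearOrder V] {G : SimpleGraph V}

/-- Removing the largest vertex `M` keeps a set connected: a walk through `M` can skip it,
since the two neighbours of `M` on the walk are smaller than `M`, hence equal or adjacent. -/
lemma ChordalOrdered.isConnectedSet_of_insert_max (hch : ChordalOrdered G) {s : Set V} {M : V}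
    (hconn : IsConnectedSet G (insert M s)) (hM : ∀ y ∈ s, y < M) : IsConnectedSet G s := by
  intro a ha b hb
  have key : ∀ {c} (w : (restrictSet G (insert M s)).Walk c b),
      ∀ a' ∈ s, (a' = c ∨ G.Adj a' c) → (restrictSet G s).Reachable a' b := by
    intro c w
    induction w with
    | nil =>
      rintro a' ha' (rfl | hadj)
      exacts [.rfl, (show (restrictSet G s).Adj a' _ from ⟨hadj, ha', hb⟩).reachable]
    | @cons c e _ hce _ ih =>
      intro a' ha' hac
      have he : e ∈ insert M s := hce.2.2
      by_cases hcM : c = M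
      · subst hcM
        have he' : e ∈ s := he.resolve_left hce.1.ne'
        refine ih hb a' ha' ?_
        rcases hac with rfl | hadj
        · exact absurd (hM a' ha') (lt_irrefl _)
        by_cases hae : a' = e
        · exact .inl hae
        · exact .inr (hch hadj.symm hce.1 (hM a' ha') (hM e he') hae)
      · have hc : c ∈ s := hce.2.1.resolve_left hcM
        have hreach : (restrictSet G s).Reachable a' c := by
          rcases hac with rfl | hadj
          exacts [.rfl, (show (restrictSet G s).Adj a' c from ⟨hadj, ha', hc⟩).reachable]
        exact hreach.trans (ih hb c hc (.inr hce.1))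
  obtain ⟨w⟩ := hconn a (.inr ha) b (.inr hb)
  exact key w a ha (.inl rfl)

lemma ChordalOrdered.exists_adj_of_adj_max (hch : ChordalOrdered G) {s : Set V} {M x : V}
    (hconn : IsConnectedSet G (insert M s)) (hM : ∀ y ∈ s, y < M) (hs : s.Nonempty)
    (hx : x ∉ s) (hxM : G.Adj x M) (hlt : x < M) : ∃ u ∈ s, G.Adj x u := by
  obtain ⟨y, hy⟩ := hs
  obtain ⟨w⟩ := hconn M (.inl rfl) y (.inr hy)
  cases w with
  | nil => exact absurd (hM M hy) (lt_irrefl _)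
  | @cons _ u _ hMu _ =>
    have hu : u ∈ s := hMu.2.2.resolve_left hMu.1.ne'
    exact ⟨u, hu, hch hxM.symm hMu.1 hlt (hM u hu) (ne_of_mem_of_not_mem hu hx).symm⟩

lemma ChordalOrdered.adj_of_isLeast (hch : ChordalOrdered G) {S : Set V} (hS : S.Finite)
    (hconn : IsConnectedSet G S) {m x : V} (hm : IsLeast S m) (hx : x ∉ S)
    (hlt : ∀ s ∈ S, G.Adj x s → x < s) (hattach : ∃ s ∈ S, G.Adj x s) : G.Adj x m := by
  classical
  obtain ⟨S, rfl⟩ := hS.exists_finset_coe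
  clear hS
  induction S using Finset.induction_on_max with
  | empty => simp at hattach
  | insert M s hM ih =>
    simp only [Finset.coe_insert] at hconn hm hx hlt hattach ⊢
    rcases s.eq_empty_or_nonempty with rfl | hs
    · simp only [Finset.coe_empty, insert_empty_eq, Set.mem_singleton_iff,
        exists_eq_left] at hm hattach
      exact hm.1 ▸ hattach
    have hmM : m ≠ M := fun h => by
      obtain ⟨y, hy⟩ := hs
      exact absurd (hm.2 (.inr hy)) (h ▸ (hM y hy).not_ge)
    have hms : m ∈ (s : Set V) := hm.1.resolve_left hmM
    have hM' : ∀ y ∈ (s : Set V), y < M := hM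
    refine ih (hch.isConnectedSet_of_insert_max hconn hM') ⟨hms, fun y hy => hm.2 (.inr hy)⟩
      (fun h => hx (.inr h)) (fun y hy => hlt y (.inr hy)) ?_
    obtain ⟨y, hy | hy, hxy⟩ := hattach
    · subst hy
      exact hch.exists_adj_of_adj_max hconn hM' (s.coe_nonempty.mpr hs) (fun h => hx (.inr h))
        hxy (hlt _ (.inl rfl) hxy)
    · exact ⟨y, hy, hxy⟩

end Chordal

/-- What the BFS layering of a graph in `T_{d+1}` provides, in a form inherited by all induced
subgraphs. -/
structure IsChordalLayering (O : OrderedGraph) (d : ℕ) (lam : O.V → ℕ) : Prop where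
  chordal : ChordalOrdered O.graph
  isLayering : IsLayering O.graph fun u => (lam u : ℤ)
  lt_of_adj : ∀ ⦃u w⦄, O.graph.Adj u w → lam w < lam u → w < u
  ncard_le : ∀ u, {w | O.graph.Adj u w ∧ w < u ∧ lam w = lam u}.ncard ≤ d

namespace IsChordalLayering

variable {O : OrderedGraph} {d : ℕ} {lam : O.V → ℕ}

lemma induce (h : IsChordalLayering O d lam) (S : Set O.V) :
    IsChordalLayering (O.induce S) d fun u => lam u.1 where
  chordal _ _ _ hu hw hlt hlt' hne := h.chordal hu hw hlt hlt' (Subtype.val_injective.ne hne)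
  isLayering _ _ hadj := h.isLayering hadj
  lt_of_adj _ _ hadj hlt := h.lt_of_adj hadj hlt
  ncard_le u :=
    (Set.ncard_le_ncard_of_injOn Subtype.val (fun _ hw => hw) Set.injOn_subtype_val).trans
      (h.ncard_le u.1)

lemma mem_Tclass (h : IsChordalLayering O d lam) (hconst : ∀ u w, lam u = lam w) :
    O ∈ Tclass d := by
  refine ⟨h.chordal, fun u => ?_⟩
  simpa only [hconst _ u, and_true] using h.ncard_le u

theorem mem_Tdr {b : ℕ} :
    ∀ {n : ℕ} {O : OrderedGraph} {lam : O.V → ℕ}, IsChordalLayering O d lam →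
      (∀ u, b ≤ lam u ∧ lam u ≤ b + n) → O ∈ Tdr d n
  | 0, _, _, h, hrange => h.mem_Tclass fun u w => by grind
  | n + 1, O, lam, h, hrange => by
    set B := {u | lam u ≤ b + n}
    refine ⟨B, mem_Tdr (h.induce B) fun u => ⟨(hrange u.1).1, u.2⟩, fun C hC => ?_⟩
    obtain ⟨x₀, hx₀, rfl⟩ := hC
    set C := {y | (restrictSet O.graph Bᶜ).Reachable x₀ y}
    have hCtop : ∀ c ∈ C, lam c = b + n + 1 := fun c hc => by
      have hcB : ¬lam c ≤ b + n := mem_of_reachable_restrictSet hc hx₀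
      have := hrange c
      omega
    have hbelow : ∀ x ∈ B, ∀ c ∈ C, O.graph.Adj x c → x < c := fun x hx c hc hxc => by
      have hxB : lam x ≤ b + n := hx
      have := hCtop c hc
      exact h.lt_of_adj hxc.symm (by omega)
    obtain ⟨m, hmC, hmle⟩ := C.exists_min_image id C.toFinite ⟨x₀, .rfl⟩
    have hmin : IsLeast C m := ⟨hmC, hmle⟩
    have hattach : ∀ x ∈ B, (∃ c ∈ C, O.graph.Adj x c) → O.graph.Adj x m ∧ x < m :=
      fun x hx hxC => by
        have hadj := h.chordal.adj_of_isLeast C.toFinite (isConnectedSet_setOf_reachable _ _ _)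
          hmin (fun hxC' => mem_of_reachable_restrictSet hxC' hx₀ hx) (hbelow x hx) hxC
        exact ⟨hadj, hbelow x hx m hmin.1 hadj⟩
    refine ⟨(h.induce C).mem_Tclass fun u w => ?_, fun x hx hxC y hy hyC hxy => ?_,
      fun x hx hxC c hc => ?_⟩
    · rw [hCtop u.1 u.2, hCtop w.1 w.2]
    · obtain ⟨hxm, hlt⟩ := hattach x hx hxC
      obtain ⟨hym, hlt'⟩ := hattach y hy hyC
      exact h.chordal hxm.symm hym.symm hlt hlt' hxy
    · exact (hattach x hx hxC).2.trans_le (hmin.2 hc)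

end IsChordalLayering

section BFS

variable {V : Type*} {G : SimpleGraph V}

lemma SimpleGraph.exists_adj_dist_eq_of_dist_eq_succ {v u : V} {l : ℕ}
    (h : G.dist v u = l + 1) : ∃ p, G.Adj u p ∧ G.dist v p = l := by
  have hreach : G.Reachable u v := (Reachable.of_dist_ne_zero (by omega : G.dist v u ≠ 0)).symm
  obtain ⟨w, hw⟩ := hreach.exists_walk_length_eq_dist
  rw [dist_comm, h] at hw
  cases w with
  | nil => simp at hw
  | @cons _ p _ hup w' =>
    refine ⟨p, hup, le_antisymm ?_ ?_⟩
    · rw [Walk.length_cons] at hw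
      rw [dist_comm]
      exact (dist_le w').trans (by omega)
    · rcases hup.diff_dist_adj (u := v) with h' | h' | h' <;> omega

/-- Otherwise `u` and the BFS parent of `p` would be two smaller neighbours of `p`, hence
adjacent, although they lie two layers apart. -/
lemma ChordalOrdered.lt_of_adj_of_dist_lt [LinearOrder V] (hch : ChordalOrdered G) {v : V}
    (hv : ∀ u, v ≤ u) {u p : V} (hup : G.Adj u p) (hlt : G.dist v p < G.dist v u) : p < u := by
  induction hl : G.dist v p generalizing u p with
  | zero =>
    have hpv : p = v := by
      rcases dist_eq_zero_iff_eq_or_not_reachable.mp hl with h | h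
      · exact h.symm
      · exact absurd ((Reachable.of_dist_ne_zero (by omega)).trans hup.reachable) h
    exact hpv ▸ lt_of_le_of_ne (hv u) (fun h => by simp [← h] at hlt)
  | succ l ih =>
    obtain ⟨q, hpq, hq⟩ := exists_adj_dist_eq_of_dist_eq_succ hl
    have hqp : q < p := ih hpq (by omega) hq
    have hu : G.dist v u = l + 2 := by
      rcases hup.diff_dist_adj (u := v) with h' | h' | h' <;> omega
    refine lt_of_not_ge fun hle => ?_
    have hne : u ≠ p := hup.ne
    have huq : G.Adj u q :=
      hch hup.symm hpq (lt_of_le_of_ne hle hne) hqp (fun h => by simp [h, hq] at hu)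
    rcases huq.diff_dist_adj (u := v) with h' | h' | h' <;> omega

end BFS

lemma isChordalLayering_dist {d : ℕ} {O : OrderedGraph} (hO : O ∈ Tclass d)
    (hconn : O.graph.Connected) {v : O.V} (hv : ∀ u, v ≤ u) :
    IsChordalLayering O (d - 1) (O.graph.dist v) where
  chordal := hO.1
  isLayering u w hadj := by
    dsimp only
    rcases hadj.diff_dist_adj (u := v) with h | h | h <;> rw [abs_le] <;> omega
  lt_of_adj _ _ hadj hlt := hO.1.lt_of_adj_of_dist_lt hv hadj hlt
  ncard_le u := by
    obtain rfl | huv := eq_or_ne v u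
    · simp [(hv _).not_gt]
    obtain ⟨l, hl⟩ := Nat.exists_eq_add_one_of_ne_zero (hconn.pos_dist_of_ne huv).ne'
    obtain ⟨p, hup, hp⟩ := exists_adj_dist_eq_of_dist_eq_succ hl
    have hpu : p < u := hO.1.lt_of_adj_of_dist_lt hv hup (by omega)
    calc {w | O.graph.Adj u w ∧ w < u ∧ O.graph.dist v w = O.graph.dist v u}.ncard
        ≤ ({w | O.graph.Adj u w ∧ w < u} \ {p}).ncard :=
          Set.ncard_le_ncard (fun w ⟨hw, hwu, hwd⟩ => ⟨⟨hw, hwu⟩, fun h => by simp_all⟩)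
      _ = {w | O.graph.Adj u w ∧ w < u}.ncard - 1 :=
          Set.ncard_sdiff_singleton_of_mem ⟨hup, hpu⟩
      _ ≤ d - 1 := Nat.sub_le_sub_right (hO.2 u) 1

theorem stmt_17_general (d : ℕ) (O : OrderedGraph) (hO : O ∈ Tclass d)
    (hconn : O.graph.Connected) (v : O.V) (hv : ∀ u, v ≤ u)
    (b k : ℕ) :
    O.induce {u | b ≤ O.graph.dist v u ∧ O.graph.dist v u ≤ b + k - 1} ∈
      Tdr (d - 1) (k - 1) :=
  ((isChordalLayering_dist hO hconn hv).induce _).mem_Tdr fun u =>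
    ⟨u.2.1, u.2.2.trans (by omega)⟩

/-- Let `G` be a connected chordal ordered graph with all left-degrees at most `d` (`d ≥ 1`),
`v` its smallest vertex and `λ(u) = d_G(v, u)` the BFS layering from `v`. Then for all
`b ≥ 0` and `k ≥ 1`, the induced ordered subgraph on the union of layers
`b, b+1, …, b+k−1` belongs to `T_{d−1,k}`. -/
theorem stmt_17 (d : ℕ) (hd : 1 ≤ d) (O : OrderedGraph) (hO : O ∈ Tclass d)
    (hconn : O.graph.Connected) (v : O.V) (hv : ∀ u, v ≤ u)
    (b k : ℕ) (hk : 1 ≤ k) :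
    O.induce {u | b ≤ O.graph.dist v u ∧ O.graph.dist v u ≤ b + k - 1} ∈
      Tdr (d - 1) (k - 1) :=
  stmt_17_general d O hO hconn v hv b k
end

section
/- Let ℓ and r be integers with r ≥ 0 and ℓ > 4r, and let z be an integer. Then among the ℓ − 2r distinct (ℓ, r)-covers of the integers, exactly 2r covers R satisfy z ∉ ⋃_{I∈R} M_{2r}(I). -/
/-- The middle part `M_d(I)` of the interval of length `l` with left endpoint `i`. -/
def Md (l d : ℕ) (i : ℤ) : Set ℤ := Set.Icc (i + d) (i + l - d - 1)

/-- `i` is a left endpoint of an interval of the `(l, r)`-cover with residue `n`,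
i.e. `i ≡ n (mod l − 2r)`. -/
def inCover (l r : ℕ) (n i : ℤ) : Prop := ((l : ℤ) - 2 * r) ∣ (i - n)

/-!
The point `z` lies in `M_{2r}(I)` exactly when the left endpoint of `I` lies in a window of
`l − 4r` consecutive integers. Since `l − 4r ≤ l − 2r`, that window meets exactly `l − 4r`
residue classes modulo `l − 2r`, so the remaining `2r` covers miss `z`.
-/

open Finset

theorem exists_dvd_sub_mem_Ico_iff {M k : ℤ} (hM : 0 < M) (hkM : k ≤ M) (a n : ℤ) :
    (∃ i, M ∣ i - n ∧ i ∈ Set.Ico a (a + k)) ↔ (n - a) % M < k := by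
  constructor
  · rintro ⟨i, hdvd, hia, hik⟩
    have hmod : (n - a) % M = (i - a) % M := (Int.modEq_iff_dvd.mpr hdvd).sub_right a
    rw [hmod, Int.emod_eq_of_lt (by omega) (by omega)]
    omega
  · intro h
    refine ⟨a + (n - a) % M, ⟨-((n - a) / M), ?_⟩, ?_, ?_⟩
    · rw [Int.emod_def]; ring
    · linarith [Int.emod_nonneg (n - a) hM.ne']
    · linarith

theorem card_filter_le_emod_sub (M k : ℕ) (hkM : k ≤ M) (a : ℤ) :
    #{n ∈ range M | (k : ℤ) ≤ ((n : ℕ) - a) % (M : ℤ)} = M - k := by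
  rcases M.eq_zero_or_pos with rfl | hM
  · simp
  have hM' : (0 : ℤ) < M := by exact_mod_cast hM
  have emod_bounds (x : ℤ) : 0 ≤ x % M ∧ x % M < M :=
    ⟨Int.emod_nonneg x hM'.ne', Int.emod_lt_of_pos x hM'⟩
  have shift_inv (s x : ℤ) (hx : x ∈ Set.Ico 0 (M : ℤ)) : ((x + s) % M - s) % M = x := by
    rw [(Int.mod_modEq (x + s) M).sub_right s, add_sub_cancel_right,
      Int.emod_eq_of_lt hx.1 hx.2]
  rw [← Nat.card_Ico k M]
  refine card_nbij' (fun n => ((n - a) % M).toNat) (fun m => ((m + a) % M).toNat)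
    ?_ ?_ ?_ ?_
  · intro n hn
    simp only [coe_filter, Set.mem_ofPred_eq, coe_Ico, Set.mem_Ico] at hn ⊢
    have := emod_bounds (n - a)
    omega
  · intro m hm
    simp only [coe_filter, mem_range, Set.mem_ofPred_eq, coe_Ico, Set.mem_Ico] at hm ⊢
    have := emod_bounds (m + a)
    rw [Int.toNat_of_nonneg this.1, shift_inv a m (by simp; omega)]
    omega
  · intro n hn
    simp only [coe_filter, mem_range, Set.mem_ofPred_eq] at hn ⊢
    have := emod_bounds (n - a)
    rw [Int.toNat_of_nonneg this.1, Int.emod_add_emod, sub_add_cancel,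
      Int.emod_eq_of_lt (by omega) (by omega)]
    simp
  · intro m hm
    simp only [coe_Ico, Set.mem_Ico] at hm ⊢
    have := emod_bounds (m + a)
    rw [Int.toNat_of_nonneg this.1, shift_inv a m (by simp; omega)]
    simp

theorem mem_Md_iff (l d : ℕ) (i z : ℤ) :
    z ∈ Md l d i ↔ i ∈ Set.Ico (z - l + d + 1) (z - d + 1) := by
  simp only [Md, Set.mem_Icc, Set.mem_Ico]
  omega

theorem exists_inCover_mem_Md_iff {l r : ℕ} (h : 2 * r < l) (n z : ℤ) :
    (∃ i, inCover l r n i ∧ z ∈ Md l (2 * r) i) ↔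
      (n - (z - l + 2 * r + 1)) % (l - 2 * r) < l - 4 * r := by
  rw [← exists_dvd_sub_mem_Ico_iff (by omega) (by omega)]
  have hend : z - l + 2 * r + 1 + (l - 4 * r) = z - (2 * r : ℕ) + 1 := by push_cast; ring
  simp only [inCover, mem_Md_iff, hend]
  push_cast
  rfl

/-- Let `l > 4r ≥ 0` and let `z` be an integer. Among the `l − 2r` distinct `(l, r)`-covers
of the integers (indexed by residues `n ∈ {0, …, l − 2r − 1}`), exactly `2r` covers `R`
satisfy `z ∉ ⋃_{I ∈ R} M_{2r}(I)`. -/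
theorem stmt_18 (l r : ℕ) (hl : 4 * r < l) (z : ℤ) :
    ({n : ℕ | n < l - 2 * r ∧
        ¬ ∃ i : ℤ, inCover l r (n : ℤ) i ∧ z ∈ Md l (2 * r) i}).ncard = 2 * r := by
  have hset : {n : ℕ | n < l - 2 * r ∧ ¬ ∃ i : ℤ, inCover l r (n : ℤ) i ∧ z ∈ Md l (2 * r) i} =
      ↑{n ∈ range (l - 2 * r) |
        ((l - 4 * r : ℕ) : ℤ) ≤ ((n : ℕ) - (z - l + 2 * r + 1)) % ((l - 2 * r : ℕ) : ℤ)} := by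
    ext n
    simp only [exists_inCover_mem_Md_iff (by omega : 2 * r < l), not_lt, coe_filter, mem_range]
    push_cast [Nat.cast_sub (by omega : 2 * r ≤ l), Nat.cast_sub (by omega : 4 * r ≤ l)]
    rfl
  rw [hset, Set.ncard_coe_finset, card_filter_le_emod_sub _ _ (by omega)]
  omega
end
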